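/- Consider the oriented crown quiver Q_n with a homogeneous action of a finite group G given by a character χ_a : G → k^× attached to each arrow a. Then every vertex of Q_n is the source of exactly one irreducible invariant path and the target of exactly one irreducible invariant path; consequently the bases-quiver of the invariant category is a disjoint union of oriented crowns. -/

import Mathlib

/-!
STATEMENT 19: For the oriented crown quiver `Q_n` (vertices `ZMod n`, one arrow
`i ⟶ i+1`) with a homogeneous action of a finite group `G` given by a character
attached to each arrow, every vertex is the source of exactly one irreducible
invariant path and the target of exactly one irreducible invariant path (hence the
bases-quiver of the invariant category is a disjoint union of oriented crowns).
-/

open Quiver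

/-- The oriented crown with `n` vertices. -/
abbrev Crown (n : ℕ) := ZMod n

instance (n : ℕ) : Quiver.{0} (Crown n) :=
  ⟨fun i j => PLift ((i : ZMod n) + (1 : ZMod n) = (j : ZMod n))⟩

section

variable {k G : Type} [Field k] [Group G] {n : ℕ}

/-- The character of a path: product of the characters of its arrows. -/
def crownPathChar (χ : ∀ x y : Crown n, (x ⟶ y) → (G →* kˣ)) :
    ∀ {x y : Crown n}, Quiver.Path x y → G → kˣ
  | _, _, .nil => fun _ => 1
  | _, _, .cons p e => fun g => crownPathChar χ p g * χ _ _ e g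

/-- A path is invariant if its character is trivial. -/
def CrownInvPath (χ : ∀ x y : Crown n, (x ⟶ y) → (G →* kˣ)) {x y : Crown n}
    (w : Quiver.Path x y) : Prop :=
  ∀ g : G, crownPathChar χ w g = 1

/-- An invariant path of positive length is irreducible if it is not a concatenation
of two invariant paths of positive length. -/
def CrownIrrInvPath (χ : ∀ x y : Crown n, (x ⟶ y) → (G →* kˣ)) {x y : Crown n}
    (w : Quiver.Path x y) : Prop :=
  CrownInvPath χ w ∧ 0 < w.length ∧
    ¬ ∃ (z : Crown n) (w₁ : Quiver.Path x z) (w₂ : Quiver.Path z y),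
        0 < w₁.length ∧ 0 < w₂.length ∧ CrownInvPath χ w₁ ∧ CrownInvPath χ w₂ ∧
          w = w₁.comp w₂

end

/-!
On the crown a path is determined by its source, or by its target, together with its length, and
every path of length at least `L` starts (and ends) with a path of length `L`. As characters
multiply along concatenation, an invariant path of positive length is therefore irreducible exactly
when no shorter path of positive length with the same source (or the same target) is invariant.
So the irreducible invariant paths at a vertex are the invariant paths of minimal positive length,
and length-injectivity makes such a path unique. One exists: if `ψ` is the character of the loop
of length `n` at `x`, traversing that loop `|G|` times gives a path of character `ψ ^ |G| = 1`.
-/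

namespace Quiver.Path

variable {V : Type*} [Quiver V]

theorem exists_eq_comp_of_le_length' {a b : V} (p : Path a b) {L : ℕ} (hL : L ≤ p.length) :
    ∃ (c : V) (q : Path a c) (r : Path c b), p = q.comp r ∧ r.length = L := by
  obtain ⟨c, q, r, rfl, hq⟩ := p.exists_eq_comp_of_le_length (Nat.sub_le p.length L)
  refine ⟨c, q, r, rfl, ?_⟩
  rw [length_comp] at hL hq
  omega

def loopPow {a : V} (ℓ : Path a a) : ℕ → Path a a
  | 0 => nil
  | m + 1 => (ℓ.loopPow m).comp ℓ

theorem length_loopPow {a : V} (ℓ : Path a a) (m : ℕ) :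
    (ℓ.loopPow m).length = m * ℓ.length := by
  induction m with
  | zero => simp [loopPow]
  | succ m ih => rw [loopPow, length_comp, ih, Nat.succ_mul]

theorem weight_loopPow {R : Type*} [Monoid R] (w : ∀ {i j : V}, (i ⟶ j) → R) {a : V}
    (ℓ : Path a a) (m : ℕ) : (ℓ.loopPow m).weight w = ℓ.weight w ^ m := by
  induction m with
  | zero => simp [loopPow]
  | succ m ih => rw [loopPow, weight_comp, ih, pow_succ]

end Quiver.Path

namespace Crown

variable {n : ℕ}

instance (x y : Crown n) : Subsingleton (x ⟶ y) := ⟨fun ⟨_⟩ ⟨_⟩ => rfl⟩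

theorem target_eq_add_length {x y : Crown n} (p : Quiver.Path x y) : y = x + p.length := by
  induction p with
  | nil => simp
  | cons p e ih =>
    rw [Path.length_cons, ← e.down]
    push_cast
    linear_combination ih

theorem exists_path_of_length (x : Crown n) (L : ℕ) {y : Crown n} (hy : x + L = y) :
    ∃ p : Quiver.Path x y, p.length = L := by
  induction L generalizing y with
  | zero =>
    obtain rfl : x = y := by simpa using hy
    exact ⟨.nil, rfl⟩
  | succ L ih =>
    obtain ⟨p, hp⟩ := ih rfl
    exact ⟨p.cons ⟨by rw [← hy]; push_cast; ring⟩, by rw [Path.length_cons, hp]⟩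

theorem path_eq_of_length_eq {x y : Crown n} (p q : Quiver.Path x y) (h : p.length = q.length) :
    p = q := by
  induction p with
  | nil => exact (Path.eq_nil_of_length_zero q h.symm).symm
  | cons p e ih =>
    cases q with
    | nil => simp at h
    | cons q e' =>
      obtain rfl : _ = _ := add_right_cancel (e.down.trans e'.down.symm)
      rw [ih q (by simpa using h), Subsingleton.elim e e']

theorem length_injective_of_source (x : Crown n) :
    Function.Injective fun s : Σ y : Crown n, Quiver.Path x y => s.2.length := by
  rintro ⟨y, p⟩ ⟨z, q⟩ (h : p.length = q.length)
  obtain rfl : y = z := by rw [target_eq_add_length p, target_eq_add_length q, h]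
  rw [path_eq_of_length_eq p q h]

theorem length_injective_of_target (x : Crown n) :
    Function.Injective fun s : Σ y : Crown n, Quiver.Path y x => s.2.length := by
  rintro ⟨y, p⟩ ⟨z, q⟩ (h : p.length = q.length)
  obtain rfl : y = z := by
    have hy := target_eq_add_length p
    rw [h] at hy
    exact add_right_cancel (hy.symm.trans (target_eq_add_length q))
  rw [path_eq_of_length_eq p q h]

end Crown

theorem existsUnique_minimal_of_injective {α β : Type*} [LinearOrder β] [WellFoundedLT β]
    {f : α → β} (hf : Function.Injective f)
    {P : α → Prop} (h : ∃ a, P a) : ∃! a, P a ∧ ∀ b, P b → f a ≤ f b := by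
  obtain ⟨a, ha, hmin⟩ := (InvImage.wf f wellFounded_lt).has_min {a | P a} h
  have hmin' : ∀ b, P b → f a ≤ f b := fun b hb => not_lt.1 (hmin b hb)
  exact ⟨a, ⟨ha, hmin'⟩, fun b hb => hf (le_antisymm (hb.2 a ha) (hmin' b hb.1))⟩

section Character

variable {k G : Type} [Field k] [Group G] {n : ℕ} (χ : ∀ x y : Crown n, (x ⟶ y) → (G →* kˣ))

theorem crownPathChar_eq_weight {x y : Crown n} (p : Quiver.Path x y) :
    crownPathChar χ p = ⇑(p.weight (χ _ _)) := by
  induction p with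
  | nil => funext g; simp [crownPathChar]
  | cons p e ih => funext g; simp [crownPathChar, ih]

theorem crownInvPath_iff_weight_eq_one {x y : Crown n} (p : Quiver.Path x y) :
    CrownInvPath χ p ↔ p.weight (χ _ _) = 1 := by
  simp [CrownInvPath, crownPathChar_eq_weight, DFunLike.ext_iff]

variable {χ}

theorem crownInvPath_comp_iff_of_left {x y z : Crown n} {q : Quiver.Path x y}
    (hq : CrownInvPath χ q) (r : Quiver.Path y z) :
    CrownInvPath χ (q.comp r) ↔ CrownInvPath χ r := by
  rw [crownInvPath_iff_weight_eq_one] at hq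
  simp [crownInvPath_iff_weight_eq_one, hq]

theorem crownInvPath_comp_iff_of_right {x y z : Crown n} (q : Quiver.Path x y)
    {r : Quiver.Path y z} (hr : CrownInvPath χ r) :
    CrownInvPath χ (q.comp r) ↔ CrownInvPath χ q := by
  rw [crownInvPath_iff_weight_eq_one] at hr
  simp [crownInvPath_iff_weight_eq_one, hr]

variable (χ)

theorem exists_crownInvPath_loop [Finite G] [NeZero n] (x : Crown n) :
    ∃ ℓ : Quiver.Path x x, CrownInvPath χ ℓ ∧ 0 < ℓ.length := by
  obtain ⟨ℓ, hℓ⟩ := Crown.exists_path_of_length x n (y := x) (by simp)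
  refine ⟨ℓ.loopPow (Nat.card G), ?_, ?_⟩
  · rw [crownInvPath_iff_weight_eq_one, Quiver.Path.weight_loopPow]
    ext g
    simp [← map_pow, pow_card_eq_one']
  · rw [Quiver.Path.length_loopPow, hℓ]
    exact Nat.mul_pos Nat.card_pos (NeZero.pos n)

theorem crownIrrInvPath_iff_minimal_of_source {x y : Crown n} (p : Quiver.Path x y) :
    CrownIrrInvPath χ p ↔ (CrownInvPath χ p ∧ 0 < p.length) ∧
      ∀ t : Σ z : Crown n, Quiver.Path x z,
        CrownInvPath χ t.2 ∧ 0 < t.2.length → p.length ≤ t.2.length := by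
  refine ⟨fun ⟨hp, hpos, hirr⟩ => ⟨⟨hp, hpos⟩, ?_⟩, fun ⟨⟨hp, hpos⟩, hmin⟩ => ⟨hp, hpos, ?_⟩⟩
  · rintro ⟨z, w⟩ ⟨hw, hwpos⟩
    by_contra! hlt
    obtain ⟨c, q, r, rfl, hq⟩ := p.exists_eq_comp_of_le_length hlt.le
    obtain ⟨⟩ : (⟨c, q⟩ : Σ z : Crown n, Quiver.Path x z) = ⟨z, w⟩ :=
      Crown.length_injective_of_source x hq
    rw [Quiver.Path.length_comp] at hlt
    exact hirr ⟨z, w, r, hwpos, by omega, hw, (crownInvPath_comp_iff_of_left hw r).1 hp, rfl⟩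
  · rintro ⟨z, w₁, w₂, h₁, h₂, hw₁, -, rfl⟩
    have : (w₁.comp w₂).length ≤ w₁.length := hmin ⟨z, w₁⟩ ⟨hw₁, h₁⟩
    rw [Quiver.Path.length_comp] at this
    omega

theorem crownIrrInvPath_iff_minimal_of_target {x y : Crown n} (p : Quiver.Path x y) :
    CrownIrrInvPath χ p ↔ (CrownInvPath χ p ∧ 0 < p.length) ∧
      ∀ t : Σ z : Crown n, Quiver.Path z y,
        CrownInvPath χ t.2 ∧ 0 < t.2.length → p.length ≤ t.2.length := by
  refine ⟨fun ⟨hp, hpos, hirr⟩ => ⟨⟨hp, hpos⟩, ?_⟩, fun ⟨⟨hp, hpos⟩, hmin⟩ => ⟨hp, hpos, ?_⟩⟩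
  · rintro ⟨z, w⟩ ⟨hw, hwpos⟩
    by_contra! hlt
    obtain ⟨c, q, r, rfl, hr⟩ := p.exists_eq_comp_of_le_length' hlt.le
    obtain ⟨⟩ : (⟨c, r⟩ : Σ z : Crown n, Quiver.Path z y) = ⟨z, w⟩ :=
      Crown.length_injective_of_target y hr
    rw [Quiver.Path.length_comp] at hlt
    exact hirr ⟨z, q, w, by omega, hwpos, (crownInvPath_comp_iff_of_right q hw).1 hp, hw, rfl⟩
  · rintro ⟨z, w₁, w₂, h₁, h₂, -, hw₂, rfl⟩
    have : (w₁.comp w₂).length ≤ w₂.length := hmin ⟨z, w₂⟩ ⟨hw₂, h₂⟩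
    rw [Quiver.Path.length_comp] at this
    omega

end Character

theorem crown_unique_irreducible_invariant_path_at_each_vertex
    {k G : Type} [Field k] [Group G] [Finite G] {n : ℕ} [NeZero n]
    (χ : ∀ x y : Crown n, (x ⟶ y) → (G →* kˣ)) (x : Crown n) :
    (∃! s : Σ y : Crown n, Quiver.Path x y, CrownIrrInvPath χ s.2) ∧
    (∃! s : Σ y : Crown n, Quiver.Path y x, CrownIrrInvPath χ s.2) := by
  obtain ⟨ℓ, hℓ⟩ := exists_crownInvPath_loop χ x
  constructor
  · simp only [crownIrrInvPath_iff_minimal_of_source]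
    exact existsUnique_minimal_of_injective (Crown.length_injective_of_source x) ⟨⟨x, ℓ⟩, hℓ⟩
  · simp only [crownIrrInvPath_iff_minimal_of_target]
    exact existsUnique_minimal_of_injective (Crown.length_injective_of_target x) ⟨⟨x, ℓ⟩, hℓ⟩
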